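/- In the polynomial ring ℚ[p_{11},p_{12},p_{21},p_{22},p_{31},p_{32}], let I be the ideal generated by the three 2×2 minors of M_1 = [[p_{11}+p_{12}, p_{11}+p_{12}],[p_{21}+p_{22}, 3p_{22}],[p_{31}+p_{32}, 2p_{32}]] together with the determinant of M_2 = [[p_{11}+p_{21}+p_{31}, 2p_{21}+2p_{31}],[p_{12}+p_{22}+p_{32}, p_{22}+4p_{32}]]. Then I equals the intersection of the two ideals P_1 = ⟨p_{31}−p_{32}, p_{21}−2p_{22}, p_{11}p_{22}−4p_{12}p_{22}−2p_{22}²+4p_{11}p_{32}−2p_{12}p_{32}+3p_{22}p_{32}+2p_{32}²⟩ and P_2 = ⟨p_{11}+p_{12}, 3p_{22}p_{31}−2p_{21}p_{32}+p_{22}p_{32}, 6p_{12}p_{21}+3p_{12}p_{22}+3p_{21}p_{22}+6p_{12}p_{31}+12p_{12}p_{32}−4p_{21}p_{32}−p_{22}p_{32}−6p_{31}p_{32}⟩, and both P_1 and P_2 are prime ideals. -/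

import Mathlib

open MvPolynomial

/-- The variable `p₁₁` in `ℚ[p₁₁,p₁₂,p₂₁,p₂₂,p₃₁,p₃₂]`. -/
noncomputable def s11 : MvPolynomial (Fin 6) ℚ := X 0
/-- The variable `p₁₂`. -/
noncomputable def s12 : MvPolynomial (Fin 6) ℚ := X 1
/-- The variable `p₂₁`. -/
noncomputable def s21 : MvPolynomial (Fin 6) ℚ := X 2
/-- The variable `p₂₂`. -/
noncomputable def s22 : MvPolynomial (Fin 6) ℚ := X 3
/-- The variable `p₃₁`. -/
noncomputable def s31 : MvPolynomial (Fin 6) ℚ := X 4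
/-- The variable `p₃₂`. -/
noncomputable def s32 : MvPolynomial (Fin 6) ℚ := X 5

/-!
Each prime is recognised through a presentation of its quotient as `D[X] ⧸ (a X + b)` with `D` a
domain, `a` prime in `D` and `a ∤ b`. Such an `a X + b` generates the kernel of `X ↦ -b / a` into
the fraction field of `D`: every `p` satisfies `aⁿ p ≡ r (mod a X + b)` for some `r ∈ D`, and `a`
is a non-zero-divisor modulo `a X + b`. A presentation is certified by a ring map to `D[X]` and a
map back to the quotient which compose to the identity.

For `P₁` a linear change of coordinates makes the quadric linear in `p₁₁` with leading coefficient
`p₂₂ + 4 p₃₂`. The third generator of `P₂` is `coeff₁ p₁₂ + coeff₀` with coefficients free of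
`p₁₁, p₁₂`, so `D` is the quotient by the first two generators (`base`, prime in the same way),
and `coeff₁` is prime in `D` because `base + (coeff₁)` is prime by a third presentation.

For the decomposition, `P₂ ⊆ I + (p₁₁ + p₁₂)` and `(p₁₁ + p₁₂) P₁ ⊆ I`; since `p₁₁ + p₁₂ ∉ P₁`,
an element `i + r (p₁₁ + p₁₂)` of `P₁ ∩ P₂` has `r ∈ P₁`, hence lies in `I`.
-/

theorem Submodule.mem_span_quadruple {R M : Type*} [Semiring R] [AddCommMonoid M] [Module R M]
    {v w x y z : M} :
    v ∈ span R ({w, x, y, z} : Set M) ↔ ∃ a b c d : R, a • w + b • x + c • y + d • z = v := by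
  rw [mem_span_insert]
  simp_rw [mem_span_triple]
  refine exists_congr fun a ↦ ⟨?_, ?_⟩
  · rintro ⟨u, ⟨b, c, d, rfl⟩, rfl⟩
    exact ⟨b, c, d, by simp only [add_assoc]⟩
  · rintro ⟨b, c, d, rfl⟩
    exact ⟨_, ⟨b, c, d, rfl⟩, by simp only [add_assoc]⟩

theorem isUnit_ofNat_of_algebraRat {A : Type*} [Ring A] [Algebra ℚ A] (n : ℕ) [n.AtLeastTwo] :
    IsUnit (OfNat.ofNat n : A) := by
  have h := (isUnit_iff_ne_zero.mpr (NeZero.ne (OfNat.ofNat n : ℚ))).map (algebraMap ℚ A)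
  rwa [map_ofNat] at h

theorem Ideal.comap_map_of_comp_eq_mk {A B F G : Type*} [CommRing A] [CommRing B] {I : Ideal A}
    [FunLike F A B] [RingHomClass F A B] [FunLike G B (A ⧸ I)] [RingHomClass G B (A ⧸ I)]
    (f : F) (g : G) (hgf : ∀ a, g (f a) = Ideal.Quotient.mk I a) :
    (I.map f).comap f = I := by
  refine le_antisymm (fun a ha => ?_) Ideal.le_comap_map
  have hker : I.map f ≤ RingHom.ker g := Ideal.map_le_iff_le_comap.mpr fun x hx => by
    simp [RingHom.mem_ker, hgf, Ideal.Quotient.eq_zero_iff_mem.mpr hx]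
  rw [← Ideal.Quotient.eq_zero_iff_mem, ← hgf]
  exact hker ha

theorem Ideal.eq_inf_of_le_sup_span_singleton {R : Type*} [CommRing R] {I P Q : Ideal R} {c : R}
    [P.IsPrime] (hc : c ∉ P) (hIP : I ≤ P) (hIQ : I ≤ Q) (hQ : Q ≤ I ⊔ Ideal.span {c})
    (hPc : P ≤ I.colon {c}) : I = P ⊓ Q := by
  refine le_antisymm (le_inf hIP hIQ) fun x ⟨hxP, hxQ⟩ => ?_
  obtain ⟨y, hy, z, hz, rfl⟩ := Submodule.mem_sup.mp (hQ hxQ)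
  obtain ⟨r, rfl⟩ := Ideal.mem_span_singleton'.mp hz
  have hr : r ∈ P :=
    (Ideal.IsPrime.mem_or_mem ‹_› (by simpa using P.sub_mem hxP (hIP hy))).resolve_right hc
  exact I.add_mem hy (by simpa using hPc hr)

namespace Polynomial

variable {D : Type*} [CommRing D] {a b : D}

theorem exists_C_pow_mul_sub_C_mem_span (p : D[X]) :
    ∃ (n : ℕ) (r : D), C a ^ n * p - C r ∈ Ideal.span {C a * X + C b} := by
  induction p using Polynomial.induction_on with
  | C r => exact ⟨0, r, by simp⟩
  | add p q hp hq =>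
    obtain ⟨m, r, hr⟩ := hp
    obtain ⟨n, s, hs⟩ := hq
    refine ⟨m + n, a ^ n * r + a ^ m * s, ?_⟩
    have : C a ^ (m + n) * (p + q) - C (a ^ n * r + a ^ m * s) =
        C a ^ n * (C a ^ m * p - C r) + C a ^ m * (C a ^ n * q - C s) := by
      simp only [map_add, map_mul, map_pow]
      ring
    rw [this]
    exact add_mem (Ideal.mul_mem_left _ _ hr) (Ideal.mul_mem_left _ _ hs)
  | monomial k r h =>
    obtain ⟨n, s, hs⟩ := h
    refine ⟨n + 1, -(s * b), ?_⟩
    have : C a ^ (n + 1) * (C r * X ^ (k + 1)) - C (-(s * b)) =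
        (C a * X) * (C a ^ n * (C r * X ^ k) - C s) + C s * (C a * X + C b) := by
      simp only [map_neg, map_mul]
      ring
    rw [this]
    exact add_mem (Ideal.mul_mem_left _ _ hs) (Ideal.mul_mem_left _ _ (Ideal.subset_span rfl))

variable [IsDomain D]

theorem mem_span_of_C_mul_mem (ha : a ≠ 0) (hab : ∀ y, a ∣ b * y → a ∣ y) {t : D[X]}
    (ht : C a * t ∈ Ideal.span {C a * X + C b}) : t ∈ Ideal.span {C a * X + C b} := by
  obtain ⟨q, hq⟩ := Ideal.mem_span_singleton'.mp ht
  -- comparing coefficients of `q * (a X + b) = a t` gives `b qₖ = a (tₖ - qₖ₋₁)`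
  obtain ⟨q, rfl⟩ : C a ∣ q := by
    refine (C_dvd_iff_dvd_coeff _ _).mpr fun k => hab _ ⟨t.coeff k - (q * X).coeff k, ?_⟩
    have hk := congrArg (coeff · k) (show C a * (q * X) + C b * q = C a * t by rw [← hq]; ring)
    simp only [coeff_add, coeff_C_mul] at hk
    linear_combination hk
  refine Ideal.mem_span_singleton'.mpr ⟨q, mul_left_cancel₀ (C_ne_zero.mpr ha) ?_⟩
  rw [← hq]
  ring

theorem isPrime_span_C_mul_X_add_C (ha : a ≠ 0) (hab : ∀ y, a ∣ b * y → a ∣ y) :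
    (Ideal.span {C a * X + C b}).IsPrime := by
  let ι := algebraMap D (FractionRing D)
  let φ := eval₂RingHom ι (-ι b / ι a)
  have hle : Ideal.span {C a * X + C b} ≤ RingHom.ker φ := by
    have : ι a ≠ 0 := IsFractionRing.to_map_eq_zero_iff.not.mpr ha
    rw [Ideal.span_le, Set.singleton_subset_iff]
    simp only [SetLike.mem_coe, RingHom.mem_ker, coe_eval₂RingHom, eval₂_add, eval₂_mul, eval₂_C,
      eval₂_X, φ]
    field_simp
    ring
  suffices RingHom.ker φ ≤ Ideal.span {C a * X + C b} from
    le_antisymm hle this ▸ RingHom.ker_isPrime φ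
  intro p hp
  obtain ⟨n, r, hr⟩ := exists_C_pow_mul_sub_C_mem_span (a := a) (b := b) p
  obtain rfl : r = 0 := by
    have h := hle hr
    rw [RingHom.mem_ker, map_sub, map_mul, RingHom.mem_ker.mp hp, mul_zero, zero_sub,
      neg_eq_zero] at h
    exact IsFractionRing.to_map_eq_zero_iff.mp (by simpa [φ] using h)
  rw [map_zero, sub_zero] at hr
  induction n with
  | zero => simpa using hr
  | succ n ih => exact ih (mem_span_of_C_mul_mem ha hab (by rwa [pow_succ', mul_assoc] at hr))

theorem isPrime_span_C_mul_X_add_C_of_prime (ha : Prime a) (hb : ¬ a ∣ b) :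
    (Ideal.span {C a * X + C b}).IsPrime :=
  isPrime_span_C_mul_X_add_C ha.ne_zero fun _ h => (ha.dvd_or_dvd h).resolve_left hb

end Polynomial

namespace MvPolynomial

variable {R σ : Type*} [CommRing R]

theorem isPrime_of_isPrime_map {B : Type*} [CommRing B] [Algebra R B]
    {I : Ideal (MvPolynomial σ R)} (f : MvPolynomial σ R →ₐ[R] B)
    (g : B →ₐ[R] MvPolynomial σ R ⧸ I) (hgf : ∀ i, g (f (X i)) = Ideal.Quotient.mk I (X i))
    (h : (I.map f).IsPrime) : I.IsPrime := by
  have hgf' : g.comp f = Ideal.Quotient.mkₐ R I := algHom_ext hgf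
  rw [← Ideal.comap_map_of_comp_eq_mk f g fun p => AlgHom.congr_fun hgf' p]
  exact h.comap f

theorem notMem_span_of_eval {s : Set (MvPolynomial σ R)} {x : MvPolynomial σ R} (w : σ → R)
    (hs : ∀ g ∈ s, eval w g = 0) (hx : eval w x ≠ 0) : x ∉ Ideal.span s :=
  fun h => hx ((Ideal.span_le (I := RingHom.ker (eval w))).mpr hs h)

end MvPolynomial

namespace Centipede

noncomputable def spohnIdeal : Ideal (MvPolynomial (Fin 6) ℚ) :=
  Ideal.span
    {(s11 + s12) * (3 * s22) - (s11 + s12) * (s21 + s22),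
     (s11 + s12) * (2 * s32) - (s11 + s12) * (s31 + s32),
     (s21 + s22) * (2 * s32) - (3 * s22) * (s31 + s32),
     (s11 + s21 + s31) * (s22 + 4 * s32) - (2 * s21 + 2 * s31) * (s12 + s22 + s32)}

noncomputable def component₁ : Ideal (MvPolynomial (Fin 6) ℚ) :=
  Ideal.span
    {s31 - s32, s21 - 2 * s22,
     s11 * s22 - 4 * s12 * s22 - 2 * s22 ^ 2 + 4 * s11 * s32
       - 2 * s12 * s32 + 3 * s22 * s32 + 2 * s32 ^ 2}

noncomputable def component₂ : Ideal (MvPolynomial (Fin 6) ℚ) :=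
  Ideal.span
    {s11 + s12,
     3 * s22 * s31 - 2 * s21 * s32 + s22 * s32,
     6 * s12 * s21 + 3 * s12 * s22 + 3 * s21 * s22 + 6 * s12 * s31
       + 12 * s12 * s32 - 4 * s21 * s32 - s22 * s32 - 6 * s31 * s32}

noncomputable def coeff₁ : MvPolynomial (Fin 6) ℚ := 6 * s21 + 3 * s22 + 6 * s31 + 12 * s32

noncomputable def coeff₀ : MvPolynomial (Fin 6) ℚ :=
  3 * s21 * s22 - 4 * s21 * s32 - s22 * s32 - 6 * s31 * s32

noncomputable def base : Ideal (MvPolynomial (Fin 6) ℚ) :=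
  Ideal.span {s11 + s12, 3 * s22 * s31 - 2 * s21 * s32 + s22 * s32}

noncomputable def baseCoeff : Ideal (MvPolynomial (Fin 6) ℚ) :=
  Ideal.span {s11 + s12, 3 * s22 * s31 - 2 * s21 * s32 + s22 * s32, coeff₁}

theorem base_le_component₂ : base ≤ component₂ :=
  Ideal.span_mono (Set.insert_subset_insert (Set.singleton_subset_iff.mpr (Set.mem_insert _ _)))

theorem base_le_baseCoeff : base ≤ baseCoeff :=
  Ideal.span_mono (Set.insert_subset_insert (Set.singleton_subset_iff.mpr (Set.mem_insert _ _)))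

/-- `ℚ[p] ⧸ (p₃₁ - p₃₂, p₂₁ - 2 p₂₂) = ℚ[y, p₁₂, p₃₂][p₁₁]` with `y = p₂₂ + 4 p₃₂`, where the
quadric is `y p₁₁ + b` with `b ≡ 14 p₁₂ p₃₂ - 42 p₃₂² (mod y)`. -/
theorem isPrime_component₁ : component₁.IsPrime := by
  let f : MvPolynomial (Fin 6) ℚ →ₐ[ℚ] Polynomial (MvPolynomial (Fin 3) ℚ) :=
    aeval ![Polynomial.X, Polynomial.C (X 1), Polynomial.C (2 * (X 0 - 4 * X 2)),
      Polynomial.C (X 0 - 4 * X 2), Polynomial.C (X 2), Polynomial.C (X 2)]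
  let g : Polynomial (MvPolynomial (Fin 3) ℚ) →ₐ[ℚ] MvPolynomial (Fin 6) ℚ :=
    Polynomial.aevalTower (aeval ![s22 + 4 * s32, s12, s32]) s11
  refine isPrime_of_isPrime_map f ((Ideal.Quotient.mkₐ ℚ _).comp g) (fun i => ?_) ?_
  · rw [AlgHom.comp_apply, Ideal.Quotient.mkₐ_eq_mk, Ideal.Quotient.eq, component₁,
      Submodule.mem_span_triple]
    fin_cases i <;> simp only [f, g, aeval_X, Matrix.cons_val, Polynomial.aevalTower_C,
      Polynomial.aevalTower_X, map_mul, map_sub, map_ofNat, Fin.zero_eta, Fin.mk_one,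
      Fin.reduceFinMk]
    · exact ⟨0, 0, 0, by simp [s11]⟩
    · exact ⟨0, 0, 0, by simp [s12]⟩
    · exact ⟨0, -1, 0, by simp only [s21, s22]; ring⟩
    · exact ⟨0, 0, 0, by simp only [s22]; ring⟩
    · exact ⟨-1, 0, 0, by simp only [s31]; ring⟩
    · exact ⟨0, 0, 0, by simp [s32]⟩
  · have hmap : component₁.map f = Ideal.span {Polynomial.C (X 0) * Polynomial.X +
        Polynomial.C (-4 * X 1 * X 0 + 14 * X 1 * X 2 - 2 * X 0 ^ 2 + 19 * X 0 * X 2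
          - 42 * X 2 ^ 2)} := by
      simp only [component₁, Ideal.map_span, Set.image_insert_eq, Set.image_singleton]
      simp only [f, s11, s12, s21, s22, s31, s32, map_mul, map_sub, map_add, map_pow, map_ofNat,
        aeval_X, Matrix.cons_val, sub_self, Ideal.span_insert_zero]
      refine congrArg (fun p => Ideal.span {p}) ?_
      simp only [map_neg, map_ofNat]
      ring
    rw [hmap]
    exact Polynomial.isPrime_span_C_mul_X_add_C_of_prime X_prime fun h =>
      notMem_span_of_eval ![0, 1, 1] (by simp)
        (by norm_num [Matrix.cons_val_two]) (Ideal.mem_span_singleton.mpr h)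

/-- `ℚ[p] ⧸ (p₁₁ + p₁₂) = ℚ[v, p₁₂, p₂₁, p₃₁][p₂₂]` with `v = 3 p₃₁ + p₃₂`, where the second
generator is `v p₂₂ + 2 p₂₁ (3 p₃₁ - v)`. -/
theorem isPrime_base : base.IsPrime := by
  let f : MvPolynomial (Fin 6) ℚ →ₐ[ℚ] Polynomial (MvPolynomial (Fin 4) ℚ) :=
    aeval ![-Polynomial.C (X 1 : MvPolynomial (Fin 4) ℚ), Polynomial.C (X 1), Polynomial.C (X 2),
      Polynomial.X, Polynomial.C (X 3), Polynomial.C (X 0 - 3 * X 3)]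
  let g : Polynomial (MvPolynomial (Fin 4) ℚ) →ₐ[ℚ] MvPolynomial (Fin 6) ℚ :=
    Polynomial.aevalTower (aeval ![3 * s31 + s32, s12, s21, s31]) s22
  refine isPrime_of_isPrime_map f ((Ideal.Quotient.mkₐ ℚ _).comp g) (fun i => ?_) ?_
  · rw [AlgHom.comp_apply, Ideal.Quotient.mkₐ_eq_mk, Ideal.Quotient.eq, base, Ideal.mem_span_pair]
    fin_cases i <;> simp only [f, g, aeval_X, Matrix.cons_val, Polynomial.aevalTower_C,
      Polynomial.aevalTower_X, map_neg, map_mul, map_sub, map_ofNat, Fin.zero_eta, Fin.mk_one,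
      Fin.reduceFinMk]
    · exact ⟨-1, 0, by simp only [s11]; ring⟩
    · exact ⟨0, 0, by simp [s12]⟩
    · exact ⟨0, 0, by simp [s21]⟩
    · exact ⟨0, 0, by simp [s22]⟩
    · exact ⟨0, 0, by simp [s31]⟩
    · exact ⟨0, 0, by simp only [s32]; ring⟩
  · have hmap : base.map f = Ideal.span {Polynomial.C (X 0) * Polynomial.X +
        Polynomial.C (6 * X 2 * X 3 - 2 * X 0 * X 2)} := by
      simp only [base, Ideal.map_span, Set.image_insert_eq, Set.image_singleton]
      simp only [f, s11, s12, s21, s22, s31, s32, map_mul, map_sub, map_add, map_ofNat, aeval_X,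
        Matrix.cons_val, neg_add_cancel, Ideal.span_insert_zero]
      refine congrArg (fun p => Ideal.span {p}) ?_
      ring
    rw [hmap]
    exact Polynomial.isPrime_span_C_mul_X_add_C_of_prime X_prime fun h =>
      notMem_span_of_eval ![0, 0, 1, 1] (by simp) (by simp) (Ideal.mem_span_singleton.mpr h)

/-- `ℚ[p] ⧸ (p₁₁ + p₁₂, coeff₁) = ℚ[u, t, p₁₂][p₂₁]` with `u = 3 p₃₁ + 2 p₃₂`, `t = p₃₁ + p₃₂`
(and `p₂₂ = -2 p₂₁ - 2 p₃₁ - 4 p₃₂`), where the second generator is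
`-2 u p₂₁ + 2 (u - 4 t) (2 u - 3 t)`. -/
theorem isPrime_baseCoeff : baseCoeff.IsPrime := by
  let f : MvPolynomial (Fin 6) ℚ →ₐ[ℚ] Polynomial (MvPolynomial (Fin 3) ℚ) :=
    aeval ![-Polynomial.C (X 2 : MvPolynomial (Fin 3) ℚ), Polynomial.C (X 2), Polynomial.X,
      -2 * Polynomial.X + Polynomial.C (2 * X 0 - 8 * X 1), Polynomial.C (X 0 - 2 * X 1),
      Polynomial.C (3 * X 1 - X 0)]
  let g : Polynomial (MvPolynomial (Fin 3) ℚ) →ₐ[ℚ] MvPolynomial (Fin 6) ℚ :=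
    Polynomial.aevalTower (aeval ![3 * s31 + 2 * s32, s31 + s32, s12]) s21
  refine isPrime_of_isPrime_map f ((Ideal.Quotient.mkₐ ℚ _).comp g) (fun i => ?_) ?_
  · rw [AlgHom.comp_apply, Ideal.Quotient.mkₐ_eq_mk, Ideal.Quotient.eq,
      ← Ideal.unit_mul_mem_iff_mem _ (isUnit_ofNat_of_algebraRat 3), baseCoeff,
      Submodule.mem_span_triple]
    fin_cases i <;> simp only [f, g, aeval_X, Matrix.cons_val, Polynomial.aevalTower_C,
      Polynomial.aevalTower_X, map_neg, map_add, map_mul, map_sub, map_ofNat, Fin.zero_eta,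
      Fin.mk_one, Fin.reduceFinMk]
    · exact ⟨-3, 0, 0, by simp only [s11]; ring⟩
    · exact ⟨0, 0, 0, by simp [s12]⟩
    · exact ⟨0, 0, 0, by simp [s21]⟩
    · exact ⟨0, 0, -1, by simp only [coeff₁, s22]; ring⟩
    · exact ⟨0, 0, 0, by simp only [s31]; ring⟩
    · exact ⟨0, 0, 0, by simp only [s32]; ring⟩
  · have hmap : baseCoeff.map f = Ideal.span {Polynomial.C (-2 * X 0) * Polynomial.X +
        Polynomial.C (2 * (X 0 - 4 * X 1) * (2 * X 0 - 3 * X 1))} := by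
      have hcoeff : f coeff₁ = 0 := by
        simp only [f, coeff₁, s21, s22, s31, s32, map_mul, map_sub, map_add, map_ofNat, aeval_X,
          Matrix.cons_val]
        ring
      simp only [baseCoeff, Ideal.map_span, Set.image_insert_eq, Set.image_singleton, hcoeff]
      simp only [f, s11, s12, s21, s22, s31, s32, map_mul, map_sub, map_add, map_neg, map_ofNat,
        aeval_X, Matrix.cons_val, neg_add_cancel, Ideal.span_insert_zero]
      rw [Set.pair_comm, Ideal.span_insert_zero]
      refine congrArg (fun p => Ideal.span {p}) ?_
      ring
    rw [hmap]
    have hprime : Prime (-2 * X 0 : MvPolynomial (Fin 3) ℚ) :=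
      (prime_isUnit_mul (isUnit_ofNat_of_algebraRat 2).neg).mpr X_prime
    exact Polynomial.isPrime_span_C_mul_X_add_C_of_prime hprime fun h =>
      notMem_span_of_eval ![0, 1, 0] (by simp) (by simp) (Ideal.mem_span_singleton.mpr h)

theorem map_baseCoeff :
    baseCoeff.map (Ideal.Quotient.mk base) = Ideal.span {Ideal.Quotient.mk base coeff₁} := by
  have hc : Ideal.Quotient.mk base (s11 + s12) = 0 :=
    Ideal.Quotient.eq_zero_iff_mem.mpr (Ideal.subset_span (by simp))
  have hg : Ideal.Quotient.mk base (3 * s22 * s31 - 2 * s21 * s32 + s22 * s32) = 0 :=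
    Ideal.Quotient.eq_zero_iff_mem.mpr (Ideal.subset_span (by simp))
  rw [baseCoeff, Ideal.map_span, Set.image_insert_eq, Set.image_pair, hc, hg,
    Ideal.span_insert_zero, Ideal.span_insert_zero]

theorem prime_mk_coeff₁ : Prime (Ideal.Quotient.mk base coeff₁) := by
  have hne : Ideal.Quotient.mk base coeff₁ ≠ 0 := fun h =>
    notMem_span_of_eval ![0, 0, 0, 0, 0, 1] (by simp [s11, s12, s21, s22, s31, s32])
      (by simp [coeff₁, s21, s22, s31, s32]) (Ideal.Quotient.eq_zero_iff_mem.mp h)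
  have := isPrime_baseCoeff
  rw [← Ideal.span_singleton_prime hne, ← map_baseCoeff]
  exact Ideal.map_isPrime_of_surjective Ideal.Quotient.mk_surjective
    (by rw [Ideal.mk_ker]; exact base_le_baseCoeff)

theorem not_mk_coeff₁_dvd : ¬ Ideal.Quotient.mk base coeff₁ ∣ Ideal.Quotient.mk base coeff₀ := by
  rw [← Ideal.mem_span_singleton, ← map_baseCoeff, Ideal.mem_quotient_iff_mem base_le_baseCoeff]
  exact notMem_span_of_eval ![0, 0, -1, -2, 0, 1]
    (by
      simp only [Set.mem_insert_iff, Set.mem_singleton_iff, forall_eq_or_imp, forall_eq, coeff₁,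
        s11, s12, s21, s22, s31, s32, map_add, map_sub, map_mul, eval_X, eval_ofNat, Matrix.cons_val]
      norm_num)
    (by
      simp only [coeff₀, s21, s22, s31, s32, map_sub, map_mul, eval_X, eval_ofNat, Matrix.cons_val]
      norm_num)

theorem isPrime_component₂ : component₂.IsPrime := by
  have := isPrime_base
  let f : MvPolynomial (Fin 6) ℚ →ₐ[ℚ] Polynomial (MvPolynomial (Fin 6) ℚ ⧸ base) :=
    aeval ![-Polynomial.X, Polynomial.X, Polynomial.C (Ideal.Quotient.mk base s21),
      Polynomial.C (Ideal.Quotient.mk base s22), Polynomial.C (Ideal.Quotient.mk base s31),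
      Polynomial.C (Ideal.Quotient.mk base s32)]
  let g : Polynomial (MvPolynomial (Fin 6) ℚ ⧸ base) →ₐ[ℚ] MvPolynomial (Fin 6) ℚ ⧸ component₂ :=
    Polynomial.aevalTower (Ideal.Quotient.factorₐ ℚ base_le_component₂)
      (Ideal.Quotient.mk component₂ s12)
  refine isPrime_of_isPrime_map (B := Polynomial (MvPolynomial (Fin 6) ℚ ⧸ base)) f g
    (fun i => ?_) ?_
  · fin_cases i <;> simp only [f, g, aeval_X, Matrix.cons_val, Polynomial.aevalTower_C,
      Polynomial.aevalTower_X, map_neg, Ideal.Quotient.factorₐ_apply_mk, Fin.zero_eta, Fin.mk_one,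
      Fin.reduceFinMk]
    · rw [← map_neg, Ideal.Quotient.eq, component₂, Submodule.mem_span_triple]
      exact ⟨-1, 0, 0, by simp only [s11]; ring⟩
    all_goals rfl
  · have hmap : component₂.map f = Ideal.span {Polynomial.C (Ideal.Quotient.mk base coeff₁) *
        Polynomial.X + Polynomial.C (Ideal.Quotient.mk base coeff₀)} := by
      have hc : f (s11 + s12) = 0 := by simp [f, s11, s12]
      have hg : f (3 * s22 * s31 - 2 * s21 * s32 + s22 * s32) = 0 := by
        have : Ideal.Quotient.mk base (3 * s22 * s31 - 2 * s21 * s32 + s22 * s32) = 0 :=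
          Ideal.Quotient.eq_zero_iff_mem.mpr (Ideal.subset_span (by simp))
        rw [← Polynomial.C_0, ← this]
        simp [f, s21, s22, s31, s32, map_ofNat]
      have hh : f (6 * s12 * s21 + 3 * s12 * s22 + 3 * s21 * s22 + 6 * s12 * s31
          + 12 * s12 * s32 - 4 * s21 * s32 - s22 * s32 - 6 * s31 * s32) =
          Polynomial.C (Ideal.Quotient.mk base coeff₁) * Polynomial.X +
            Polynomial.C (Ideal.Quotient.mk base coeff₀) := by
        simp only [f, coeff₁, coeff₀, s12, s21, s22, s31, s32, map_sub, map_add, map_mul, map_ofNat,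
          aeval_X, Matrix.cons_val]
        ring
      rw [component₂, Ideal.map_span, Set.image_insert_eq, Set.image_pair, hc, hg, hh,
        Ideal.span_insert_zero, Ideal.span_insert_zero]
    rw [hmap]
    exact Polynomial.isPrime_span_C_mul_X_add_C_of_prime prime_mk_coeff₁ not_mk_coeff₁_dvd

theorem spohnIdeal_le_component₁ : spohnIdeal ≤ component₁ := by
  simp only [spohnIdeal, Ideal.span_le, Set.insert_subset_iff, Set.singleton_subset_iff,
    SetLike.mem_coe, component₁, Submodule.mem_span_triple]
  exact ⟨⟨0, -(s11 + s12), 0, by ring⟩, ⟨-(s11 + s12), 0, 0, by ring⟩,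
    ⟨-3 * s22, 2 * s32, 0, by ring⟩,
    ⟨-2 * s12 - s22 + 2 * s32, -2 * s12 - s22 + 2 * s32, 1, by ring⟩⟩

theorem spohnIdeal_le_component₂ : spohnIdeal ≤ component₂ := by
  simp only [spohnIdeal, Ideal.span_le, Set.insert_subset_iff, Set.singleton_subset_iff,
    SetLike.mem_coe]
  refine ⟨?_, ?_, ?_, (Ideal.unit_mul_mem_iff_mem _ (isUnit_ofNat_of_algebraRat 3)).mp ?_⟩ <;>
    rw [component₂, Submodule.mem_span_triple]
  exacts [⟨2 * s22 - s21, 0, 0, by ring⟩, ⟨s32 - s31, 0, 0, by ring⟩, ⟨0, -1, 0, by ring⟩,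
    ⟨3 * (s22 + 4 * s32), -1, -1, by ring⟩]

theorem component₂_le_sup : component₂ ≤ spohnIdeal ⊔ Ideal.span {s11 + s12} := by
  rw [sup_comm, spohnIdeal, ← Ideal.span_insert, component₂, Ideal.span_le]
  simp only [Set.insert_subset_iff, Set.singleton_subset_iff, SetLike.mem_coe]
  exact ⟨Ideal.subset_span (Set.mem_insert _ _),
    Ideal.mem_span_insert.mpr ⟨0, _, Submodule.mem_span_quadruple.mpr ⟨0, 0, -1, 0, rfl⟩, by ring⟩,
    Ideal.mem_span_insert.mpr
      ⟨3 * (s22 + 4 * s32), _, Submodule.mem_span_quadruple.mpr ⟨0, 0, 1, -3, rfl⟩, by ring⟩⟩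

theorem component₁_le_colon : component₁ ≤ spohnIdeal.colon {s11 + s12} := by
  simp only [component₁, Ideal.span_le, Set.insert_subset_iff, Set.singleton_subset_iff,
    SetLike.mem_coe, Submodule.mem_colon_singleton, smul_eq_mul, spohnIdeal,
    Submodule.mem_span_quadruple]
  exact ⟨⟨0, -1, 0, 0, by ring⟩, ⟨-1, 0, 0, 0, by ring⟩,
    ⟨-2 * s12 - s22 + 2 * s32, -2 * s12 - s22 + 2 * s32, 0, s11 + s12, by ring⟩⟩

theorem spohnIdeal_eq_inf : spohnIdeal = component₁ ⊓ component₂ :=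
  have := isPrime_component₁
  Ideal.eq_inf_of_le_sup_span_singleton
    (notMem_span_of_eval ![1, 0, 0, 0, 0, 0] (by simp [s11, s12, s21, s22, s31, s32])
      (by simp [s11, s12]))
    spohnIdeal_le_component₁ spohnIdeal_le_component₂ component₂_le_sup component₁_le_colon

end Centipede

theorem centipede_primary_decomposition :
    (Ideal.span
        {(s11 + s12) * (3 * s22) - (s11 + s12) * (s21 + s22),
         (s11 + s12) * (2 * s32) - (s11 + s12) * (s31 + s32),
         (s21 + s22) * (2 * s32) - (3 * s22) * (s31 + s32),
         (s11 + s21 + s31) * (s22 + 4 * s32)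
           - (2 * s21 + 2 * s31) * (s12 + s22 + s32)}
      = Ideal.span
          {s31 - s32, s21 - 2 * s22,
           s11 * s22 - 4 * s12 * s22 - 2 * s22 ^ 2 + 4 * s11 * s32
             - 2 * s12 * s32 + 3 * s22 * s32 + 2 * s32 ^ 2}
        ⊓ Ideal.span
          {s11 + s12,
           3 * s22 * s31 - 2 * s21 * s32 + s22 * s32,
           6 * s12 * s21 + 3 * s12 * s22 + 3 * s21 * s22 + 6 * s12 * s31
             + 12 * s12 * s32 - 4 * s21 * s32 - s22 * s32 - 6 * s31 * s32}) ∧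
    (Ideal.span
        {s31 - s32, s21 - 2 * s22,
         s11 * s22 - 4 * s12 * s22 - 2 * s22 ^ 2 + 4 * s11 * s32
           - 2 * s12 * s32 + 3 * s22 * s32 + 2 * s32 ^ 2} :
      Ideal (MvPolynomial (Fin 6) ℚ)).IsPrime ∧
    (Ideal.span
        {s11 + s12,
         3 * s22 * s31 - 2 * s21 * s32 + s22 * s32,
         6 * s12 * s21 + 3 * s12 * s22 + 3 * s21 * s22 + 6 * s12 * s31
           + 12 * s12 * s32 - 4 * s21 * s32 - s22 * s32 - 6 * s31 * s32} :
      Ideal (MvPolynomial (Fin 6) ℚ)).IsPrime :=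
  ⟨Centipede.spohnIdeal_eq_inf, Centipede.isPrime_component₁, Centipede.isPrime_component₂⟩
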